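/- The class of a q-Laguerre–Hahn form is a nonnegative integer. Equivalently: there is no normalized regular form u satisfying H_q(Φ u) + Ψ u + B(x^{-1} u (h_q u)) = 0 with Φ monic of degree at most 1, B of degree at most 1, and Ψ a nonzero constant (i.e. with s = max(deg Ψ − 1, max(deg Φ, deg B) − 2) = −1). -/

import Mathlib

open Polynomial

noncomputable section

namespace QLH

/-- A *form*: a linear functional on ℂ[x]. -/
abbrev PForm : Type := Polynomial ℂ →ₗ[ℂ] ℂ

private lemma divByMonic_add (d f g : Polynomial ℂ) (hd : d.Monic) :
    (f + g) /ₘ d = f /ₘ d + g /ₘ d := by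
  apply mul_left_cancel₀ hd.ne_zero
  have h1 : d * (f /ₘ d) = f - f %ₘ d := by
    rw [Polynomial.modByMonic_eq_sub_mul_div f d]; ring
  have h2 : d * (g /ₘ d) = g - g %ₘ d := by
    rw [Polynomial.modByMonic_eq_sub_mul_div g d]; ring
  have h3 : d * ((f + g) /ₘ d) = (f + g) - (f + g) %ₘ d := by
    rw [Polynomial.modByMonic_eq_sub_mul_div (f + g) d]; ring
  rw [mul_add, h1, h2, h3, Polynomial.add_modByMonic]
  ring

private lemma divByMonic_smul (d f : Polynomial ℂ) (a : ℂ) (hd : d.Monic) :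
    (a • f) /ₘ d = a • (f /ₘ d) := by
  apply mul_left_cancel₀ hd.ne_zero
  have h1 : d * (f /ₘ d) = f - f %ₘ d := by
    rw [Polynomial.modByMonic_eq_sub_mul_div f d]; ring
  have h3 : d * ((a • f) /ₘ d) = (a • f) - (a • f) %ₘ d := by
    rw [Polynomial.modByMonic_eq_sub_mul_div (a • f) d]; ring
  rw [h3, Polynomial.smul_modByMonic, mul_smul_comm, h1, smul_sub]

/-- `(h_a f)(x) = f (a x)`. -/
def hP (a : ℂ) : Polynomial ℂ →ₗ[ℂ] Polynomial ℂ :=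
  (Polynomial.aeval (Polynomial.C a * Polynomial.X : Polynomial ℂ)).toLinearMap

/-- `(θ_c f)(x) = (f(x) - f(c))/(x - c)`. -/
def thetaP (c : ℂ) : Polynomial ℂ →ₗ[ℂ] Polynomial ℂ where
  toFun f := (f - C (f.eval c)) /ₘ (X - C c)
  map_add' f g := by
    have h : f + g - C ((f + g).eval c)
        = (f - C (f.eval c)) + (g - C (g.eval c)) := by
      simp only [eval_add, C_add]; ring
    rw [h, divByMonic_add _ _ _ (monic_X_sub_C c)]
  map_smul' a f := by
    have h : a • f - C ((a • f).eval c) = a • (f - C (f.eval c)) := by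
      simp only [eval_smul, smul_eq_mul, smul_sub, Polynomial.smul_C]
    rw [h, divByMonic_smul _ _ _ (monic_X_sub_C c)]
    rfl

/-- `(H_q f)(x) = (f(qx) - f(x))/((q-1)x)`. -/
def HqP (q : ℂ) : Polynomial ℂ →ₗ[ℂ] Polynomial ℂ :=
  (q - 1)⁻¹ • (thetaP 0 ∘ₗ (hP q - LinearMap.id))

/-- `⟨h_a u, f⟩ = ⟨u, h_a f⟩`. -/
def hF (a : ℂ) (u : PForm) : PForm := u ∘ₗ hP a

/-- `⟨H_q u, f⟩ = -⟨u, H_q f⟩`. -/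
def HqF (q : ℂ) (u : PForm) : PForm := -(u ∘ₗ HqP q)

/-- `⟨g u, f⟩ = ⟨u, g f⟩`. -/
def mF (g : Polynomial ℂ) (u : PForm) : PForm := u ∘ₗ LinearMap.mulLeft ℂ g

/-- `⟨(x - c)⁻¹ u, f⟩ = ⟨u, θ_c f⟩`. -/
def divF (c : ℂ) (u : PForm) : PForm := u ∘ₗ thetaP c

/-- The Dirac form `δ_c`. -/
def deltaF (c : ℂ) : PForm := Polynomial.leval c

/-- Kernel used in the left product of a form by a polynomial. -/
def kern (u : PForm) (j : ℕ) : Polynomial ℂ :=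
  ∑ i ∈ Finset.range (j + 1), C (u (X ^ (j - i))) * X ^ i

/-- The left product `f ↦ u f`, `(uf)(x) = ⟨u_ζ, (x f(x) - ζ f(ζ))/(x - ζ)⟩`. -/
def lmul (u : PForm) : Polynomial ℂ →ₗ[ℂ] Polynomial ℂ where
  toFun f := f.sum fun j a => a • kern u j
  map_add' f g :=
    Polynomial.sum_add_index f g _ (fun i => zero_smul ℂ _) fun i b₁ b₂ => add_smul b₁ b₂ _
  map_smul' a f := by
    rw [Polynomial.sum_smul_index f a (fun j b => b • kern u j) fun i => zero_smul ℂ _]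
    simp only [Polynomial.sum_def, mul_smul, ← Finset.smul_sum]
    rfl

/-- The Cauchy product of two forms: `⟨uv, f⟩ = ⟨u, v f⟩`. -/
def cF (u v : PForm) : PForm := u ∘ₗ lmul v

/-- The q-difference equation `H_q(Φu) + Ψu + B(x⁻¹ u (h_q u)) = 0`. -/
def LHeq (q : ℂ) (u : PForm) (Φ Ψ B : Polynomial ℂ) : Prop :=
  HqF q (mF Φ u) + mF Ψ u + mF B (divF 0 (cF u (hF q u))) = 0

/-- A form is regular when it possesses a MOPS. -/
def IsRegular (u : PForm) : Prop :=
  ∃ P : ℕ → Polynomial ℂ, (∀ n, (P n).Monic) ∧ (∀ n, (P n).natDegree = n) ∧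
    (∀ n, u (P n * P n) ≠ 0) ∧ ∀ m n, m ≠ n → u (P m * P n) = 0

/-- A regular form is q-semiclassical when it satisfies `H_q(Φu) + Ψu = 0`, `Φ` monic. -/
def IsSemiclassical (q : ℂ) (u : PForm) : Prop :=
  IsRegular u ∧ ∃ Φ Ψ : Polynomial ℂ, Φ.Monic ∧ HqF q (mF Φ u) + mF Ψ u = 0

/-- A regular form is q-Laguerre–Hahn when it satisfies some equation `LHeq`. -/
def IsLaguerreHahn (q : ℂ) (u : PForm) : Prop :=
  IsRegular u ∧ ∃ Φ Ψ B : Polynomial ℂ, Φ.Monic ∧ LHeq q u Φ Ψ B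

/-- `u` is of class `s`: `s` is the minimum of `max (deg Ψ - 1) (max (deg Φ) (deg B) - 2)`
over all q-difference equations `LHeq q u Φ Ψ B` (`Φ` monic) satisfied by `u`. -/
def HasClass (q : ℂ) (u : PForm) (s : ℕ) : Prop :=
  (∃ Φ Ψ B : Polynomial ℂ, Φ.Monic ∧ LHeq q u Φ Ψ B ∧
      Φ.natDegree ≤ s + 2 ∧ B.natDegree ≤ s + 2 ∧ Ψ.natDegree ≤ s + 1) ∧
  ∀ t : ℕ, (∃ Φ Ψ B : Polynomial ℂ, Φ.Monic ∧ LHeq q u Φ Ψ B ∧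
      Φ.natDegree ≤ t + 2 ∧ B.natDegree ≤ t + 2 ∧ Ψ.natDegree ≤ t + 1) → s ≤ t

/-- Formal Stieltjes series `S(u)(z) = -∑ (u)_n z^{-n-1}`, as a formal Laurent
series in the variable `T = z⁻¹`. -/
def Sf (u : PForm) : LaurentSeries ℂ :=
  HahnSeries.ofPowerSeries ℤ ℂ (PowerSeries.mk fun n => if n = 0 then 0 else -u (X ^ (n - 1)))

/-- A polynomial `f(z)`, viewed as a formal Laurent series in `T = z⁻¹`. -/
def toLS (f : Polynomial ℂ) : LaurentSeries ℂ :=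
  ∑ j ∈ Finset.range (f.natDegree + 1), HahnSeries.single (-(j : ℤ)) (f.coeff j)

/-- The Laurent series `z` (in the variable `T = z⁻¹`). -/
def zLS : LaurentSeries ℂ := HahnSeries.single (-1 : ℤ) 1

/-- `(h_a F)(z) = F(az)` on formal Laurent series in `T = z⁻¹`. -/
def hLS (a : ℂ) (F : LaurentSeries ℂ) : LaurentSeries ℂ where
  coeff := fun k => a ^ (-k) * F.coeff k
  isPWO_support' := F.isPWO_support'.mono fun k hk => by
    simp only [Function.mem_support] at hk ⊢
    exact fun h => hk (by rw [h, mul_zero])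

/-- `(H_q F)(z) = (F(qz) - F(z))/((q-1)z)` on formal Laurent series in `T = z⁻¹`. -/
def HqLS (q : ℂ) (F : LaurentSeries ℂ) : LaurentSeries ℂ :=
  HahnSeries.single (1 : ℤ) ((q - 1)⁻¹) * (hLS q F - F)

/-! Testing the equation against `1, x, …, x⁴` with `Φ = p x + f₀`, `Ψ = c`, `B = b₁ x + b₀`
gives `c + b₁ = 0` and a recursion for the moments `mₙ = ⟨u, xⁿ⟩`. Its first two steps
force `Δ₁ ((q + 1) p + c q²) = 0`, where `Δₙ = det (m_{i+j})_{0 ≤ i,j ≤ n}`. Regularity makes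
every `Δₙ` nonzero: the unitriangular coefficient matrix of the MOPS turns the Hankel matrix
into the diagonal Gram matrix `(⟨u, Pᵢ Pⱼ⟩)`. Hence `(q + 1) p + c q² = 0`, which is impossible
for `Φ = 1`, while for `Φ = x + f₀` the next two steps of the recursion determine `m₃`, `m₄`
and make `Δ₂` vanish. -/

theorem hP_X_pow (a : ℂ) (k : ℕ) : hP a (X ^ k) = C (a ^ k) * X ^ k := by
  rw [hP, AlgHom.toLinearMap_apply, map_pow, aeval_X, mul_pow, ← C_pow]

theorem thetaP_zero_X_pow_succ (k : ℕ) : thetaP 0 (X ^ (k + 1)) = X ^ k := by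
  change (X ^ (k + 1) - C (eval 0 (X ^ (k + 1)))) /ₘ (X - C 0) = X ^ k
  rw [eval_pow, eval_X, zero_pow k.succ_ne_zero, C_0, sub_zero, sub_zero, pow_succ',
    mul_divByMonic_cancel_left _ monic_X]

theorem thetaP_zero_X : thetaP 0 X = 1 := by
  simpa only [zero_add, pow_one, pow_zero] using thetaP_zero_X_pow_succ 0

theorem thetaP_C (c a : ℂ) : thetaP c (C a) = 0 := by
  change (C a - C (eval c (C a))) /ₘ (X - C c) = 0
  rw [eval_C, sub_self, zero_divByMonic]

theorem thetaP_C_mul (c a : ℂ) (f : Polynomial ℂ) : thetaP c (C a * f) = C a * thetaP c f := by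
  rw [← smul_eq_C_mul, map_smul, smul_eq_C_mul]

theorem HqP_one (q : ℂ) : HqP q 1 = 0 := by
  simp [HqP, hP]

theorem HqP_X_pow_succ {q : ℂ} (hq : q ≠ 1) (k : ℕ) :
    HqP q (X ^ (k + 1)) = C (∑ i ∈ Finset.range (k + 1), q ^ i) * X ^ k := by
  have hq' : q - 1 ≠ 0 := sub_ne_zero.mpr hq
  rw [HqP, LinearMap.smul_apply, LinearMap.comp_apply, LinearMap.sub_apply, LinearMap.id_apply,
    hP_X_pow, ← sub_one_mul, ← C_1, ← C_sub, ← smul_eq_C_mul, map_smul,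
    thetaP_zero_X_pow_succ, smul_smul, geom_sum_eq hq, smul_eq_C_mul, div_eq_inv_mul]

theorem map_C_mul (u : PForm) (a : ℂ) (f : Polynomial ℂ) : u (C a * f) = a * u f := by
  rw [← smul_eq_C_mul, map_smul, smul_eq_mul]

theorem hF_X_pow (q : ℂ) (u : PForm) (k : ℕ) : hF q u (X ^ k) = q ^ k * u (X ^ k) := by
  rw [hF, LinearMap.comp_apply, hP_X_pow, map_C_mul]

theorem lmul_X_pow (w : PForm) (j : ℕ) : lmul w (X ^ j) = kern w j := by
  change (X ^ j : Polynomial ℂ).sum (fun j a => a • kern w j) = kern w j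
  rw [X_pow_eq_monomial, sum_monomial_index _ _ (zero_smul ℂ _), one_smul]

theorem cF_X_pow (u w : PForm) (n : ℕ) :
    cF u w (X ^ n) = ∑ i ∈ Finset.range (n + 1), w (X ^ (n - i)) * u (X ^ i) := by
  simp only [cF, LinearMap.comp_apply, lmul_X_pow, kern, map_sum, map_C_mul]

def qConv (q : ℂ) (m : ℕ → ℂ) (n : ℕ) : ℂ :=
  ∑ i ∈ Finset.range (n + 1), q ^ (n - i) * m (n - i) * m i

theorem cF_hF_X_pow (q : ℂ) (u : PForm) (n : ℕ) :
    cF u (hF q u) (X ^ n) = qConv q (fun k => u (X ^ k)) n := by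
  simp only [cF_X_pow, hF_X_pow, qConv]

theorem LHeq.apply {q : ℂ} {u : PForm} {Φ Ψ B : Polynomial ℂ} (h : LHeq q u Φ Ψ B)
    (f : Polynomial ℂ) : u (Φ * HqP q f) = u (Ψ * f) + cF u (hF q u) (thetaP 0 (B * f)) := by
  have := LinearMap.congr_fun h f
  simp only [HqF, mF, divF, LinearMap.add_apply, LinearMap.neg_apply, LinearMap.comp_apply,
    LinearMap.mulLeft_apply, LinearMap.zero_apply] at this
  linear_combination -this

section

variable {q p f0 c b1 b0 : ℂ} {u : PForm}

theorem LHeq.moment_zero (h : LHeq q u (C p * X + C f0) (C c) (C b1 * X + C b0))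
    (hu : u 1 = 1) : c + b1 = 0 := by
  have := h.apply 1
  rw [HqP_one, mul_zero, map_zero, mul_one, mul_one, map_add, thetaP_C, add_zero, thetaP_C_mul,
    thetaP_zero_X, ← mul_one (C c), ← pow_zero X, map_C_mul, map_C_mul, cF_hF_X_pow] at this
  simp only [qConv, zero_add, Finset.sum_range_one, Nat.zero_sub, pow_zero, hu, mul_one] at this
  linear_combination -this

theorem LHeq.moment_succ (hq : q ≠ 1) (h : LHeq q u (C p * X + C f0) (C c) (C b1 * X + C b0))
    (n : ℕ) :
    (∑ i ∈ Finset.range (n + 1), q ^ i) * (p * u (X ^ (n + 1)) + f0 * u (X ^ n)) =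
      c * u (X ^ (n + 1)) + b1 * qConv q (fun k => u (X ^ k)) (n + 1) +
        b0 * qConv q (fun k => u (X ^ k)) n := by
  have := h.apply (X ^ (n + 1))
  set r := ∑ i ∈ Finset.range (n + 1), q ^ i
  have hΦ : (C p * X + C f0) * (C r * X ^ n) = C (r * p) * X ^ (n + 1) + C (r * f0) * X ^ n := by
    simp only [C_mul]; ring
  have hB : (C b1 * X + C b0) * X ^ (n + 1) = C b1 * X ^ (n + 1 + 1) + C b0 * X ^ (n + 1) := by
    ring
  rw [HqP_X_pow_succ hq, hΦ, hB] at this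
  simp only [map_add, map_C_mul, thetaP_C_mul, thetaP_zero_X_pow_succ, cF_hF_X_pow] at this
  linear_combination this

end

def hankel (m : ℕ → ℂ) (n : ℕ) : Matrix (Fin n) (Fin n) ℂ :=
  Matrix.of fun i j => m (i + j)

theorem map_mul_eq_sum_coeff (u : PForm) {f g : Polynomial ℂ} {n : ℕ}
    (hf : f.natDegree < n) (hg : g.natDegree < n) :
    u (f * g) = ∑ k : Fin n, ∑ l : Fin n, f.coeff k * u (X ^ (k + l : ℕ)) * g.coeff l := by
  conv_lhs => rw [f.as_sum_range_C_mul_X_pow' hf, g.as_sum_range_C_mul_X_pow' hg]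
  simp only [Finset.sum_mul, Finset.mul_sum, map_sum, Finset.sum_range]
  rw [Finset.sum_comm]
  refine Finset.sum_congr rfl fun k _ => Finset.sum_congr rfl fun l _ => ?_
  rw [mul_mul_mul_comm, ← C_mul, ← pow_add, ← smul_eq_C_mul, map_smul, smul_eq_mul]
  ring

theorem IsRegular.det_hankel_ne_zero {u : PForm} (hu : IsRegular u) (n : ℕ) :
    (hankel (fun k => u (X ^ k)) n).det ≠ 0 := by
  obtain ⟨P, hmonic, hdeg, hnorm, horth⟩ := hu
  set M : Matrix (Fin n) (Fin n) ℂ := Matrix.of fun i j => (P j).coeff i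
  have hM : M.det = 1 := Matrix.det_matrixOfPolynomials (fun i => P i) (fun i => hdeg i)
    (fun i => hmonic i)
  have hgram : M.transpose * hankel (fun k => u (X ^ k)) n * M =
      Matrix.diagonal fun i : Fin n => u (P i * P i) := by
    ext i j
    rw [Matrix.diagonal_apply]
    trans u (P i * P j)
    · rw [map_mul_eq_sum_coeff u ((hdeg i).trans_lt i.isLt) ((hdeg j).trans_lt j.isLt)]
      simp only [Matrix.mul_apply, Finset.sum_mul, Matrix.transpose_apply, M, hankel,
        Matrix.of_apply]
      rw [Finset.sum_comm]
    · split_ifs with h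
      · rw [h]
      · exact horth i j (Fin.val_injective.ne h)
  have hdet := congrArg Matrix.det hgram
  rw [Matrix.det_mul, Matrix.det_mul, Matrix.det_transpose, hM, one_mul, mul_one,
    Matrix.det_diagonal] at hdet
  rw [hdet]
  exact Finset.prod_ne_zero_iff.mpr fun i _ => hnorm i

theorem hankel_det_two (m : ℕ → ℂ) : (hankel m 2).det = m 0 * m 2 - m 1 ^ 2 := by
  simp [Matrix.det_fin_two, hankel, sq]

theorem hankel_det_three (m : ℕ → ℂ) :
    (hankel m 3).det =
      m 0 * m 2 * m 4 + 2 * m 1 * m 2 * m 3 - m 2 ^ 3 - m 1 ^ 2 * m 4 - m 0 * m 3 ^ 2 := by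
  simp only [hankel, Matrix.det_fin_three, Matrix.of_apply, Fin.isValue, Fin.coe_ofNat_eq_mod,
    Nat.zero_mod, Nat.one_mod, Nat.mod_succ, Nat.reduceAdd, add_zero, zero_add]
  ring

section

variable {q p f0 c b1 b0 : ℂ} {m : ℕ → ℂ}

theorem hankel_det_two_mul_eq_zero_of_recursion (hm0 : m 0 = 1) (hb : c + b1 = 0)
    (hrec : ∀ n, (∑ i ∈ Finset.range (n + 1), q ^ i) * (p * m (n + 1) + f0 * m n) =
      c * m (n + 1) + b1 * qConv q m (n + 1) + b0 * qConv q m n) :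
    (hankel m 2).det * ((q + 1) * p + c * q ^ 2) = 0 := by
  have R0 := hrec 0
  have R1 := hrec 1
  simp only [qConv, Finset.sum_range_succ, Finset.sum_range_zero, zero_add, Nat.add_one_sub_one,
    tsub_zero, tsub_self, pow_zero, pow_one, hm0, one_mul, mul_one] at R0 R1
  rw [hankel_det_two, hm0]
  linear_combination R1 - (q + 1) * m 1 * R0
    + ((q ^ 2 + 1) * m 2 + q * m 1 ^ 2 - (q + 1) ^ 2 * m 1 ^ 2) * hb

theorem hankel_det_three_eq_zero_of_recursion (hq0 : q ≠ 0) (hq1 : q + 1 ≠ 0)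
    (hc : c * q ^ 2 + (q + 1) = 0) (hm0 : m 0 = 1) (hb : c + b1 = 0)
    (hrec : ∀ n, (∑ i ∈ Finset.range (n + 1), q ^ i) * (m (n + 1) + f0 * m n) =
      c * m (n + 1) + b1 * qConv q m (n + 1) + b0 * qConv q m n) :
    (hankel m 3).det = 0 := by
  have R0 := hrec 0
  have R2 := hrec 2
  have R3 := hrec 3
  simp only [qConv, Finset.sum_range_succ, Finset.sum_range_zero, zero_add, Nat.add_one_sub_one,
    Nat.reduceAdd, Nat.reduceSub, tsub_zero, tsub_self, pow_zero, pow_one, hm0, one_mul,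
    mul_one] at R0 R2 R3
  have hb0 : q * b0 - q * f0 + m 1 = 0 := by
    linear_combination -q * R0 - q * (q + 1) * m 1 * hb + m 1 * hc
  have hm3 : m 3 = q * f0 * (m 1 ^ 2 - m 2) + 2 * m 1 * m 2 - m 1 ^ 3 := by
    refine mul_left_cancel₀ (pow_ne_zero 2 hq0) ?_
    linear_combination q ^ 2 * R2 + (q ^ 2 * ((q ^ 3 + 1) * m 3 + (q ^ 2 + q) * m 1 * m 2)) * hb
      + (m 3 - ((q ^ 3 + 1) * m 3 + (q ^ 2 + q) * m 1 * m 2)) * hc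
      + (q * ((q ^ 2 + 1) * m 2 + q * m 1 ^ 2)) * hb0
  have hm4 : m 4 = m 2 ^ 2 + (m 1 - q * f0) * (m 3 - m 1 * m 2) := by
    refine mul_left_cancel₀ (mul_ne_zero (pow_ne_zero 2 hq0) hq1) ?_
    linear_combination q ^ 2 * R3
      + (q ^ 2 * ((q ^ 4 + 1) * m 4 + (q ^ 3 + q) * m 1 * m 3 + q ^ 2 * m 2 ^ 2)) * hb
      + (m 4 - ((q ^ 4 + 1) * m 4 + (q ^ 3 + q) * m 1 * m 3 + q ^ 2 * m 2 ^ 2)) * hc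
      + (q * ((q ^ 3 + 1) * m 3 + (q ^ 2 + q) * m 1 * m 2)) * hb0
  rw [hankel_det_three, hm0, hm4, hm3]
  ring

end

theorem _root_.Polynomial.Monic.coeff_one_eq_zero_or_one {R : Type*} [Semiring R] {Φ : R[X]}
    (hΦ : Φ.Monic) (h : Φ.natDegree ≤ 1) : Φ.coeff 1 = 0 ∨ Φ.coeff 1 = 1 := by
  rcases Nat.le_one_iff_eq_zero_or_eq_one.mp h with h0 | h1
  · exact .inl (coeff_eq_zero_of_natDegree_lt (by omega))
  · exact .inr (h1 ▸ hΦ.coeff_natDegree)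

/-- the class of a q-Laguerre–Hahn form is a nonnegative integer:
no normalized regular form satisfies an equation with `deg Φ ≤ 1`, `deg B ≤ 1`
and `Ψ` a nonzero constant. -/
theorem class_nonneg (q : ℂ) (hq0 : q ≠ 0) (hq : ∀ n : ℕ, 1 ≤ n → q ^ n ≠ 1) :
    ¬ ∃ (u : PForm) (Φ Ψ B : Polynomial ℂ),
      u 1 = 1 ∧ IsRegular u ∧ Φ.Monic ∧ Φ.natDegree ≤ 1 ∧ B.natDegree ≤ 1 ∧
      Ψ ≠ 0 ∧ Ψ.natDegree = 0 ∧ LHeq q u Φ Ψ B := by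
  rintro ⟨u, Φ, Ψ, B, hu, hreg, hΦ, hΦdeg, hBdeg, hΨ, hΨdeg, heq⟩
  have hq1 : q ≠ 1 := by simpa only [pow_one] using hq 1 le_rfl
  have hq2 : q + 1 ≠ 0 := fun h =>
    hq 2 one_le_two (by rw [eq_neg_of_add_eq_zero_left h]; norm_num)
  obtain ⟨c, rfl⟩ : ∃ c, Ψ = C c := ⟨_, eq_C_of_natDegree_eq_zero hΨdeg⟩
  have hc : c ≠ 0 := by rintro rfl; exact hΨ C_0
  rw [eq_X_add_C_of_natDegree_le_one hΦdeg, eq_X_add_C_of_natDegree_le_one hBdeg] at heq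
  set m : ℕ → ℂ := fun k => u (X ^ k)
  have hm0 : m 0 = 1 := by simpa only [m, pow_zero] using hu
  have hb := heq.moment_zero hu
  have hrec := heq.moment_succ hq1
  have hcrit : (q + 1) * Φ.coeff 1 + c * q ^ 2 = 0 :=
    (mul_eq_zero.mp (hankel_det_two_mul_eq_zero_of_recursion hm0 hb hrec)).resolve_left
      (hreg.det_hankel_ne_zero 2)
  rcases hΦ.coeff_one_eq_zero_or_one hΦdeg with hp | hp
  · rw [hp, mul_zero, zero_add] at hcrit
    exact mul_ne_zero hc (pow_ne_zero 2 hq0) hcrit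
  · simp only [hp, one_mul] at hrec
    have hcrit' : c * q ^ 2 + (q + 1) = 0 := by linear_combination hcrit - (q + 1) * hp
    exact hreg.det_hankel_ne_zero 3
      (hankel_det_three_eq_zero_of_recursion hq0 hq2 hcrit' hm0 hb hrec)

end QLH

end
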